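/- arXiv:2007.04744 — 4 statements merged into one kernel-verified Lean document; each statement's English description precedes it below -/
import Mathlib

section
/- Let a : 𝕋 → ℂ be measurable and suppose there is C > 0 such that the function z ↦ a(z)(1 − z^{2l}) is essentially bounded by C for every positive integer l. Then a ∈ L^∞(𝕋) and ‖a‖_∞ ≤ C/2. -/
/-!
Off the countable set of torsion points, the multiples of `2z` are dense in the circle, so
`|1 - z^{2l}|` comes arbitrarily close to `2` along positive `l` (the conjugate symmetry
`|1 - z^{-k}| = |1 - z^k|` lets us use all integer multiples). Hence `2 |a z| ≤ C` for almost
every `z`.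
-/

open scoped ENNReal Real
open MeasureTheory AddCircle

instance : Fact (0 < 2 * Real.pi) := ⟨by positivity⟩

namespace AddCircle

theorem countable_setOf_isOfFinAddOrder (T : ℝ) :
    {u : AddCircle T | IsOfFinAddOrder u}.Countable := by
  have : {u : AddCircle T | IsOfFinAddOrder u} = ⋃ n : ℕ, {u | (n + 1) • u = 0} := by
    ext u
    simp only [Set.mem_ofPred_eq, Set.mem_iUnion, isOfFinAddOrder_iff_nsmul_eq_zero]
    exact ⟨fun ⟨n, hn, hu⟩ ↦ ⟨n - 1, by rwa [Nat.sub_add_cancel hn]⟩,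
      fun ⟨n, hu⟩ ↦ ⟨n + 1, n.succ_pos, hu⟩⟩
  rw [this]
  exact Set.countable_iUnion fun n ↦ (finite_torsion T n.succ_pos).countable

theorem fourier_zsmul {T : ℝ} (m n : ℤ) (u : AddCircle T) :
    fourier m (n • u) = fourier (m * n) u := by
  rw [fourier_apply, fourier_apply, smul_smul]

theorem norm_one_sub_fourier_natAbs {T : ℝ} (n : ℤ) (u : AddCircle T) :
    ‖1 - fourier (n.natAbs : ℤ) u‖ = ‖1 - fourier n u‖ := by
  obtain ⟨m, rfl | rfl⟩ := n.eq_nat_or_neg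
  · rfl
  · rw [Int.natAbs_neg, Int.natAbs_natCast, fourier_neg, ← Complex.norm_conj, map_sub, map_one]

variable {T : ℝ} [hT : Fact (0 < T)]

theorem fourier_one_half_period : fourier 1 ((T / 2 : ℝ) : AddCircle T) = -1 := by
  have hT0 : (T : ℂ) ≠ 0 := Complex.ofReal_ne_zero.2 hT.out.ne'
  have : 2 * π * Complex.I * ((1 : ℤ) : ℂ) * ((T / 2 : ℝ) : ℂ) / T = π * Complex.I := by
    push_cast; field_simp
  rw [fourier_coe_apply, this, Complex.exp_pi_mul_I]

-- With connectedness this makes `haarAddCircle` atomless (`IsAddHaarMeasure.nullSingletonClass`).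
instance : Nontrivial (AddCircle T) :=
  ⟨⟨(T / 2 : ℝ), 0, fun h ↦ by
    have := congrArg (fourier 1) h
    rw [fourier_one_half_period, fourier_eval_zero] at this
    norm_num at this⟩⟩

theorem ae_not_isOfFinAddOrder :
    ∀ᵐ u ∂(haarAddCircle : Measure (AddCircle T)), ¬IsOfFinAddOrder u :=
  ae_iff.2 <| by simpa using (countable_setOf_isOfFinAddOrder T).measure_zero _

theorem norm_le_half_of_forall_norm_mul_one_sub_fourier_le {v : AddCircle T}
    (hv : ¬IsOfFinAddOrder v) {c : ℂ} {C : ℝ} (hC : 0 ≤ C)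
    (h : ∀ n : ℕ, 1 ≤ n → ‖c * (1 - fourier n v)‖ ≤ C) : ‖c‖ ≤ C / 2 := by
  have hmultiples (n : ℤ) : ‖c * (1 - fourier 1 (n • v))‖ ≤ C := by
    rw [fourier_zsmul, one_mul, norm_mul, ← norm_one_sub_fourier_natAbs, ← norm_mul]
    rcases n.natAbs.eq_zero_or_pos with h0 | hpos
    · simpa [h0] using hC
    · exact h _ hpos
  have hdense : DenseRange (· • v : ℤ → AddCircle T) :=
    denseRange_zsmul_iff.2 (addOrderOf_eq_zero_iff.2 hv)
  have hhalf := hdense.induction_on (p := fun w ↦ ‖c * (1 - fourier 1 w)‖ ≤ C)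
    ((T / 2 : ℝ) : AddCircle T) (isClosed_le (by fun_prop) continuous_const) hmultiples
  rw [fourier_one_half_period] at hhalf
  norm_num at hhalf
  linarith

end AddCircle

/-- If `a : 𝕋 → ℂ` is measurable and `‖a·(1 - χ_{2l})‖_∞ ≤ C` for every
positive integer `l`, then `a ∈ L^∞(𝕋)` with `‖a‖_∞ ≤ C/2`. -/
theorem statement1 (a : AddCircle (2 * π) → ℂ) (ha : Measurable a) (C : ℝ)
    (hC : ∀ l : ℕ, 1 ≤ l →
      ∀ᵐ z ∂(haarAddCircle : Measure (AddCircle (2 * π))),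
        ‖a z * (1 - fourier (2 * (l : ℤ)) z)‖ ≤ C) :
    MemLp a ∞ (haarAddCircle : Measure (AddCircle (2 * π))) ∧
      eLpNorm a ∞ (haarAddCircle : Measure (AddCircle (2 * π))) ≤
        ENNReal.ofReal (C / 2) := by
  have hC0 : 0 ≤ C := by
    obtain ⟨z, hz⟩ := (hC 1 le_rfl).exists
    exact (norm_nonneg _).trans hz
  have hall := ae_all_iff.2 fun l ↦ Filter.eventually_imp_distrib_left.2 (hC l)
  have hbound : ∀ᵐ z ∂(haarAddCircle : Measure (AddCircle (2 * π))), ‖a z‖ ≤ C / 2 := by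
    filter_upwards [hall, ae_not_isOfFinAddOrder] with z hz hinf
    refine norm_le_half_of_forall_norm_mul_one_sub_fourier_le (v := 2 • z)
      (fun h ↦ hinf (h.of_nsmul two_ne_zero)) hC0 fun n hn ↦ ?_
    rw [← natCast_zsmul, fourier_zsmul, Nat.cast_ofNat, mul_comm (n : ℤ)]
    exact hz n hn
  exact ⟨memLp_top_of_bound ha.aestronglyMeasurable _ hbound,
    eLpNorm_exponent_top.trans_le (eLpNormEssSup_le_of_ae_bound hbound)⟩
end

section
/- The only one-sided checkerboard matrix (indexed by ℕ₀ × ℕ₀) that generates a bounded operator on ℓ^p(ℕ₀) (1 ≤ p ≤ ∞) is the zero matrix. -/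
/-!
A checkerboard matrix is a Hankel matrix `C j k = c (j + k)` whose symbol `c` is `2`-periodic.
Boundedness forces `c n → 0`: for `p < ∞` the column `T e₀ = (c j)_j` lies in `ℓ^p`, and for
`p = ∞` the row `(c k)_k` must be summable against the constant sequence `1`. A periodic
sequence tending to `0` vanishes identically.
-/

open scoped ENNReal

/-- `ℓ^p(ℕ₀)` with complex entries. -/
noncomputable abbrev SeqN (p : ℝ≥0∞) := lp (fun _ : ℕ => ℂ) p

/-- The one-sided infinite matrix `A` generates the bounded operator `T` on `ℓ^p(ℕ₀)`. -/
def GeneratesN (p : ℝ≥0∞) [Fact (1 ≤ p)] (A : ℕ → ℕ → ℂ)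
    (T : SeqN p →L[ℂ] SeqN p) : Prop :=
  ∀ φ : SeqN p, ∀ j : ℕ, HasSum (fun k : ℕ => A j k * φ k) (T φ j)

open scoped Topology
open Filter

section Checkerboard

variable {α : Type*} {C : ℕ → ℕ → α}

def IsCheckerboard (C : ℕ → ℕ → α) : Prop :=
  ∀ j k : ℕ, C (j + 1) (k + 1) = C j k ∧ C (j + 1) k = C j (k + 1)

theorem eq_hankel_of_succ_left (hC : ∀ j k : ℕ, C (j + 1) k = C j (k + 1)) (j k : ℕ) :
    C j k = C 0 (j + k) := by
  induction j generalizing k with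
  | zero => rw [Nat.zero_add]
  | succ n ih => rw [hC n k, ih (k + 1), Nat.succ_add, Nat.add_succ]

theorem IsCheckerboard.eq_hankel (hC : IsCheckerboard C) (j k : ℕ) : C j k = C 0 (j + k) :=
  eq_hankel_of_succ_left (fun j k => (hC j k).2) j k

theorem IsCheckerboard.periodic (hC : IsCheckerboard C) : Function.Periodic (C 0) 2 := fun n => by
  rw [← (hC 0 (n + 1)).2, (hC 0 n).1]

end Checkerboard

theorem Function.Periodic.eq_of_tendsto_atTop {X : Type*} [TopologicalSpace X] [T2Space X]
    {f : ℕ → X} {c : ℕ} (hf : Function.Periodic f c) (hc : c ≠ 0) {a : X}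
    (hlim : Tendsto f atTop (𝓝 a)) (n : ℕ) : f n = a := by
  have hshift : Tendsto (fun m : ℕ => n + m * c) atTop atTop :=
    tendsto_atTop_mono (fun m => Nat.le_add_left _ n)
      (tendsto_id.atTop_mul_const' (Nat.pos_of_ne_zero hc))
  refine tendsto_nhds_unique (tendsto_const_nhds.congr fun m => ?_) (hlim.comp hshift)
  exact ((hf.nat_mul m) n).symm

theorem Memℓp.tendsto_norm_cofinite_zero {ι : Type*} {E : ι → Type*}
    [∀ i, NormedAddCommGroup (E i)] {p : ℝ≥0∞} {f : ∀ i, E i} (hf : Memℓp f p)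
    (hp : p ≠ ∞) : Tendsto (fun i => ‖f i‖) cofinite (𝓝 0) := by
  rcases eq_or_ne p 0 with rfl | hp₀
  · refine tendsto_const_nhds.congr' ?_
    filter_upwards [(memℓp_zero_iff.mp hf).compl_mem_cofinite] with i hi
    simp_all
  have hpos : 0 < p.toReal := ENNReal.toReal_pos hp₀ hp
  have hpow := ((hf.summable hpos).tendsto_cofinite_zero).rpow_const (p := p.toReal⁻¹)
    (Or.inr (inv_nonneg.mpr hpos.le))
  rw [Real.zero_rpow (inv_ne_zero hpos.ne')] at hpow
  exact hpow.congr fun i => Real.rpow_rpow_inv (norm_nonneg _) hpos.ne'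

namespace GeneratesN

variable {p : ℝ≥0∞} [Fact (1 ≤ p)] {A : ℕ → ℕ → ℂ} {T : SeqN p →L[ℂ] SeqN p}

theorem apply_single (hgen : GeneratesN p A T) (j k : ℕ) : T (lp.single p k 1) j = A j k := by
  refine (hgen _ j).unique ?_
  convert hasSum_single k fun i hi => ?_ using 1
  · simp
  · simp [Pi.single_eq_of_ne hi]

theorem tendsto_column (hgen : GeneratesN p A T) (hp : p ≠ ∞) (k : ℕ) :
    Tendsto (fun j => A j k) atTop (𝓝 0) := by
  have hcol := (T (lp.single p k 1)).2.tendsto_norm_cofinite_zero hp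
  rw [Nat.cofinite_eq_atTop] at hcol
  exact (tendsto_zero_iff_norm_tendsto_zero.mpr hcol).congr fun j => hgen.apply_single j k

theorem summable_row {T : SeqN ∞ →L[ℂ] SeqN ∞} (hgen : GeneratesN ∞ A T) (j : ℕ) :
    Summable (A j) := by
  simpa [lp.infty_coeFn_one] using (hgen 1 j).summable

end GeneratesN

/-- The only one-sided checkerboard matrix (simultaneously of Toeplitz and of
Hankel type) generating a bounded operator on `ℓ^p(ℕ₀)`, `1 ≤ p ≤ ∞`, is zero. -/
theorem statement4 (p : ℝ≥0∞) [Fact (1 ≤ p)] (C : ℕ → ℕ → ℂ)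
    (hcb : ∀ j k : ℕ, C (j + 1) (k + 1) = C j k ∧ C (j + 1) k = C j (k + 1))
    (T : SeqN p →L[ℂ] SeqN p) (hgen : GeneratesN p C T) :
    ∀ j k : ℕ, C j k = 0 := by
  have hC : IsCheckerboard C := hcb
  have hsymbol : Tendsto (C 0) atTop (𝓝 0) := by
    rcases eq_or_ne p ∞ with rfl | hp
    · exact (hgen.summable_row 0).tendsto_atTop_zero
    · refine (hgen.tendsto_column hp 0).congr fun j => ?_
      rw [hC.eq_hankel, Nat.add_zero]
  intro j k
  rw [hC.eq_hankel]
  exact hC.periodic.eq_of_tendsto_atTop two_ne_zero hsymbol _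
end

section
/- A Toeplitz operator T(a) on ℓ^p(ℕ₀), 1 ≤ p ≤ ∞, with a ∈ M^p is compact if and only if a = 0. -/
open scoped ENNReal Real
open MeasureTheory AddCircle

/-- `ℓ^p(ℤ)` with complex entries. -/
noncomputable abbrev SeqZ (p : ℝ≥0∞) := lp (fun _ : ℤ => ℂ) p

/-- The bi-infinite matrix `A` generates the bounded operator `T` on `ℓ^p(ℤ)`. -/
def GeneratesZ (p : ℝ≥0∞) [Fact (1 ≤ p)] (A : ℤ → ℤ → ℂ)
    (T : SeqZ p →L[ℂ] SeqZ p) : Prop :=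
  ∀ φ : SeqZ p, ∀ j : ℤ, HasSum (fun k : ℤ => A j k * φ k) (T φ j)

/-- `a ∈ M^p`, witnessed by the bounded Laurent (convolution) operator `La` on
`ℓ^p(ℤ)` whose matrix is `(â_{j-k})_{j,k∈ℤ}`; then `‖a‖_{M^p} = ‖La‖`. -/
def MemMp (p : ℝ≥0∞) [Fact (1 ≤ p)] (a : AddCircle (2 * π) → ℂ)
    (La : SeqZ p →L[ℂ] SeqZ p) : Prop :=
  Integrable a haarAddCircle ∧
    GeneratesZ p (fun j k => fourierCoeff a (j - k)) La

open Filter Topology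
open scoped FourierTransform BoundedContinuousFunction NNReal

/-!
If `T(a)` is compact, pick a norm-convergent subsequence of its columns `T e_k = (â (j - k))_j`.
By Riemann–Lebesgue every coordinate of the columns tends to `0`, so the limit is `0`; but the
column `T e_k` contains `â n` as soon as `n + k ≥ 0`, so every `â n` vanishes. An integrable
function on the circle with vanishing Fourier coefficients annihilates the trigonometric
polynomials, hence (by density) all continuous functions, hence (by dominated convergence) the
indicators of closed sets, so it is `0` almost everywhere.
-/

theorem IsCompactOperator.exists_strictMono_tendsto {𝕜 E F : Type*}
    [NontriviallyNormedField 𝕜] [SeminormedAddCommGroup E] [NormedSpace 𝕜 E]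
    [SeminormedAddCommGroup F] [NormedSpace 𝕜 F] {f : E →L[𝕜] F} (hf : IsCompactOperator f)
    {u : ℕ → E} {C : ℝ} (hu : ∀ n, ‖u n‖ ≤ C) :
    ∃ y : F, ∃ φ : ℕ → ℕ, StrictMono φ ∧ Tendsto (fun n => f (u (φ n))) atTop (𝓝 y) := by
  obtain ⟨K, hK, hfK⟩ := hf.image_closedBall_subset_compact (f := (f : E →ₗ[𝕜] F)) C
  obtain ⟨y, -, φ, hφ, hlim⟩ :=
    hK.tendsto_subseq fun n => hfK ⟨u n, mem_closedBall_zero_iff.2 (hu n), rfl⟩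
  exact ⟨y, φ, hφ, hlim⟩

section IntegralAgainstContinuous

variable {X : Type*} [TopologicalSpace X] [MeasurableSpace X] {μ : Measure X}

theorem ae_eq_zero_of_forall_integral_smul_eq_zero [BorelSpace X] [HasOuterApproxClosed X]
    {E : Type*} [NormedAddCommGroup E] [NormedSpace ℝ E] [CompleteSpace E] {f : X → E}
    (hf : Integrable f μ)
    (h : ∀ g : X →ᵇ ℝ≥0, ∫ x, (g x : ℝ) • f x ∂μ = 0) : f =ᵐ[μ] 0 := by
  refine ae_eq_zero_of_forall_setIntegral_isClosed_eq_zero hf fun s hs => ?_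
  have hlim : Tendsto (fun n => ∫ x, (hs.apprSeq n x : ℝ) • f x ∂μ) atTop
      (𝓝 (∫ x in s, f x ∂μ)) := by
    rw [← integral_indicator hs.measurableSet]
    refine tendsto_integral_of_dominated_convergence (fun x => ‖f x‖)
      (fun n => (NNReal.continuous_coe.comp (hs.apprSeq n).continuous).aestronglyMeasurable.smul
        hf.aestronglyMeasurable) hf.norm (fun n => .of_forall fun x => ?_) (.of_forall fun x => ?_)
    · rw [norm_smul, NNReal.norm_eq]
      exact mul_le_of_le_one_left (norm_nonneg _)
        (HasOuterApproxClosed.apprSeq_apply_le_one hs n x)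
    · have hx := (NNReal.tendsto_coe.2 <| tendsto_pi_nhds.1
        (HasOuterApproxClosed.tendsto_apprSeq hs) x).smul_const (f x)
      by_cases hxs : x ∈ s <;> simpa [hxs] using hx
  simp only [h] at hlim
  exact tendsto_nhds_unique tendsto_const_nhds hlim |>.symm

variable [CompactSpace X] [OpensMeasurableSpace X] {𝕜 : Type*} [RCLike 𝕜] {a : X → 𝕜}

theorem MeasureTheory.Integrable.continuousMap_mul (ha : Integrable a μ) (g : C(X, 𝕜)) :
    Integrable (fun x => g x * a x) μ :=
  ha.bdd_mul g.continuous.aestronglyMeasurable (.of_forall g.norm_coe_le_norm)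

noncomputable def integralMulCLM (ha : Integrable a μ) : C(X, 𝕜) →L[𝕜] 𝕜 :=
  LinearMap.mkContinuous
    { toFun := fun g => ∫ x, g x * a x ∂μ
      map_add' := fun g₁ g₂ => by
        simp only [ContinuousMap.add_apply, add_mul]
        exact integral_add (ha.continuousMap_mul g₁) (ha.continuousMap_mul g₂)
      map_smul' := fun c g => by
        simp only [ContinuousMap.smul_apply, smul_eq_mul, mul_assoc, RingHom.id_apply]
        exact integral_const_mul c _ }
    (∫ x, ‖a x‖ ∂μ) fun g => by
      rw [mul_comm, ← integral_const_mul]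
      refine norm_integral_le_of_norm_le (ha.norm.const_mul _) (.of_forall fun x => ?_)
      rw [norm_mul]
      exact mul_le_mul_of_nonneg_right (g.norm_coe_le_norm x) (norm_nonneg _)

theorem integralMulCLM_apply (ha : Integrable a μ) (g : C(X, 𝕜)) :
    integralMulCLM ha g = ∫ x, g x * a x ∂μ :=
  rfl

end IntegralAgainstContinuous

section Fourier

variable {T : ℝ} [Fact (0 < T)]

theorem fourierCoeff_eq_integral_exp_smul {E : Type*} [NormedAddCommGroup E] [NormedSpace ℂ E]
    (f : AddCircle T → E) (n : ℤ) :
    fourierCoeff f n = (1 / T) • ∫ v : ℝ, 𝐞 (-(v * (n / T))) •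
      (Set.Ioc 0 T).indicator (fun x : ℝ => f x) v := by
  rw [fourierCoeff_eq_intervalIntegral f n 0, zero_add,
    intervalIntegral.integral_of_le (Fact.out : 0 < T).le, ← integral_indicator measurableSet_Ioc]
  congr 2 with v
  by_cases hv : v ∈ Set.Ioc 0 T
  · simp only [Set.indicator_of_mem hv, fourier_coe_apply, Circle.smul_def,
      Real.fourierChar_apply]
    congr 2
    push_cast
    field_simp
  · simp [Set.indicator_of_notMem hv]

theorem tendsto_fourierCoeff_cofinite {E : Type*} [NormedAddCommGroup E] [NormedSpace ℂ E]
    (f : AddCircle T → E) :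
    Tendsto (fourierCoeff f) cofinite (𝓝 0) := by
  have hdiv : Tendsto (fun n : ℤ => (n : ℝ) / T) cofinite (cocompact ℝ) :=
    Tendsto.comp (Homeomorph.mulRight₀ T⁻¹ (inv_ne_zero (Fact.out : 0 < T).ne')).map_cocompact.le
      Int.tendsto_coe_cofinite
  have := ((Real.tendsto_integral_exp_smul_cocompact
    ((Set.Ioc 0 T).indicator (fun x : ℝ => f x))).comp hdiv).const_smul (1 / T)
  rw [smul_zero] at this
  exact this.congr fun n => (fourierCoeff_eq_integral_exp_smul f n).symm

theorem ae_eq_zero_of_fourierCoeff_eq_zero {f : AddCircle T → ℂ}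
    (hf : Integrable f haarAddCircle) (h : ∀ n, fourierCoeff f n = 0) :
    f =ᵐ[haarAddCircle] 0 := by
  have hker : (Submodule.span ℂ (Set.range (@fourier T))).topologicalClosure ≤
      LinearMap.ker (integralMulCLM hf : C(AddCircle T, ℂ) →ₗ[ℂ] ℂ) := by
    refine Submodule.topologicalClosure_minimal _ (Submodule.span_le.2 ?_)
      (integralMulCLM hf).isClosed_ker
    rintro _ ⟨m, rfl⟩
    simpa [integralMulCLM_apply, fourierCoeff] using h (-m)
  rw [span_fourier_closure_eq_top] at hker
  refine ae_eq_zero_of_forall_integral_smul_eq_zero hf fun g => ?_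
  simp only [Complex.real_smul]
  exact hker (Submodule.mem_top (x := ⟨fun x => ((g x : ℝ) : ℂ), by fun_prop⟩))

end Fourier

section ToeplitzMatrix

variable {p : ℝ≥0∞} [Fact (1 ≤ p)] {A : ℕ → ℕ → ℂ} {T : SeqN p →L[ℂ] SeqN p}

theorem GeneratesN.apply_single_s11 (hT : GeneratesN p A T) (j k : ℕ) :
    T (lp.single p k 1) j = A j k :=
  (hT _ j).unique <| by
    simpa using hasSum_single (f := fun m => A j m * (lp.single p k (1 : ℂ) : ℕ → ℂ) m) k
      fun m hm => by simp [hm]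

theorem GeneratesN.eq_zero (hT : GeneratesN p (fun _ _ => (0 : ℂ)) T) : T = 0 := by
  refine ContinuousLinearMap.ext fun φ => lp.ext <| funext fun j => ?_
  have hsum := hT φ j
  simp only [zero_mul] at hsum
  simpa using hsum.unique hasSum_zero

theorem GeneratesN.toeplitz_coeff_eq_zero_of_isCompactOperator {c : ℤ → ℂ}
    (hc : Tendsto c atBot (𝓝 0))
    (hT : GeneratesN p (fun j k => c ((j : ℤ) - k)) T) (hcomp : IsCompactOperator T) :
    c = 0 := by
  set u : ℕ → SeqN p := fun k => T (lp.single p k 1)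
  have hu : ∀ k j : ℕ, u k j = c (j - k) := fun k j => hT.apply_single_s11 j k
  obtain ⟨y, φ, hφ, hlim⟩ := hcomp.exists_strictMono_tendsto (C := 1)
    (u := fun k => lp.single p k (1 : ℂ)) fun k => by
      rw [lp.norm_single (zero_lt_one.trans_le Fact.out), norm_one]
  have hφ_top : Tendsto (fun i => (φ i : ℤ)) atTop atTop :=
    tendsto_natCast_atTop_atTop.comp hφ.tendsto_atTop
  have hy : y = 0 := by
    refine lp.ext (funext fun j => tendsto_nhds_unique
      (tendsto_pi_nhds.1 ((lp.uniformContinuous_coe.continuous.tendsto y).comp hlim) j) ?_)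
    show Tendsto (fun i => u (φ i) j) atTop (𝓝 0)
    simp only [hu, sub_eq_add_neg]
    exact hc.comp (tendsto_atBot_add_const_left _ _ (tendsto_neg_atTop_atBot.comp hφ_top))
  funext n
  have hbound : ∀ k : ℕ, 0 ≤ n + k → ‖c n‖ ≤ ‖u k‖ := fun k hk =>
    calc ‖c n‖ = ‖u k (n + k).toNat‖ := by
          rw [hu, Int.toNat_of_nonneg hk, add_sub_cancel_right]
      _ ≤ ‖u k‖ := lp.norm_apply_le_norm (zero_lt_one.trans_le Fact.out).ne' _ _
  have hnorm : Tendsto (fun i => ‖u (φ i)‖) atTop (𝓝 0) := by simpa [hy] using hlim.norm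
  refine norm_le_zero_iff.1 (ge_of_tendsto hnorm ?_)
  filter_upwards [hφ_top.eventually_ge_atTop (-n)] with i hi using hbound _ (by omega)

end ToeplitzMatrix

/-- A Toeplitz operator `T(a)` on `ℓ^p(ℕ₀)`, `1 ≤ p ≤ ∞`, with symbol
`a ∈ M^p` is compact if and only if `a = 0`. -/
theorem statement11 (p : ℝ≥0∞) [Fact (1 ≤ p)]
    (a : AddCircle (2 * π) → ℂ) (La : SeqZ p →L[ℂ] SeqZ p)
    (ha : MemMp p a La)
    (T : SeqN p →L[ℂ] SeqN p)
    (hT : GeneratesN p (fun j k => fourierCoeff a ((j : ℤ) - (k : ℤ))) T) :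
    IsCompactOperator T ↔ a =ᵐ[haarAddCircle] 0 := by
  refine ⟨fun hcomp => ?_, fun ha0 => ?_⟩
  · have hc := hT.toeplitz_coeff_eq_zero_of_isCompactOperator
      ((tendsto_fourierCoeff_cofinite a).mono_left atBot_le_cofinite) hcomp
    exact ae_eq_zero_of_fourierCoeff_eq_zero ha.1 (congrFun hc)
  · have hc : fourierCoeff a = 0 := by
      rw [fourierCoeff_congr_ae ha0]
      ext n
      simp [fourierCoeff]
    simp only [hc, Pi.zero_apply] at hT
    rw [hT.eq_zero]
    exact isCompactOperator_zero
end

section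
/- Let A be a bounded linear operator on ℓ^p(ℕ₀), 1 ≤ p ≤ ∞, given by a matrix (A_{j,k})_{j,k∈ℕ₀} satisfying the displacement relations A_{j−1,k} + A_{j+1,k} − A_{j,k−1} − A_{j,k+1} = 0 for all j,k ≥ 1. Then there exist bounded sequences φ ∈ ℓ^∞(ℤ) and ψ ∈ ℓ^∞(ℕ) such that A_{j,k} = φ_{j−k} + ψ_{j+k+1} for all j,k ∈ ℕ₀, i.e., A is the sum of a Toeplitz and a Hankel matrix. -/
open scoped ENNReal

/-!
The displacement relation says that `D j k := A j k - A (j+1) (k+1)` satisfies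
`D (j+1) k = D j (k+1)`, so `D` depends only on `j + k`. Reading the Hankel symbol off the two
main diagonals, `ψ n := A ⌊n/2⌋ ⌈n/2⌉`, gives `ψ n - ψ (n+2) = D` along the antidiagonal `n`;
hence `A j k - ψ (j+k)` is constant along diagonals, i.e. Toeplitz. Both symbols are built from
matrix entries, which are bounded by `‖T‖` since `A j k = (T eₖ) j`.
-/

section ToeplitzHankel

variable {α : Type*}

theorem eq_tsub_tsub_of_diag_invariant (B : ℕ → ℕ → α)
    (hB : ∀ j k, B (j + 1) (k + 1) = B j k) (j k : ℕ) : B j k = B (j - k) (k - j) := by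
  induction j generalizing k with
  | zero => simp
  | succ j ih =>
    cases k with
    | zero => simp
    | succ k => rw [hB, ih, Nat.add_sub_add_right, Nat.add_sub_add_right]

variable [AddCommGroup α]

def SatisfiesDisplacement (A : ℕ → ℕ → α) : Prop :=
  ∀ j k, A j (k + 1) + A (j + 2) (k + 1) = A (j + 1) k + A (j + 1) (k + 2)

def hankelPart (A : ℕ → ℕ → α) (n : ℕ) : α := A (n / 2) (n - n / 2)

/-- `A - ψ` read off the first column (`m ≥ 0`) and the first row (`m ≤ 0`). -/
def toeplitzPart (A : ℕ → ℕ → α) (m : ℤ) : α :=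
  A m.toNat (-m).toNat - hankelPart A (m.toNat + (-m).toNat)

variable {A : ℕ → ℕ → α}

theorem SatisfiesDisplacement.sub_diag_eq (hA : SatisfiesDisplacement A) (j k : ℕ) :
    A j k - A (j + 1) (k + 1) = A 0 (j + k) - A 1 (j + k + 1) := by
  induction j generalizing k with
  | zero => simp
  | succ j ih =>
    rw [show j + 1 + k = j + (k + 1) by omega, ← ih, sub_eq_sub_iff_add_eq_add]
    exact (hA j k).symm

theorem SatisfiesDisplacement.hankelPart_sub_hankelPart_add_two (hA : SatisfiesDisplacement A)
    (n : ℕ) : hankelPart A n - hankelPart A (n + 2) = A 0 n - A 1 (n + 1) := by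
  have h := hA.sub_diag_eq (n / 2) (n - n / 2)
  rw [show n / 2 + (n - n / 2) = n by omega] at h
  unfold hankelPart
  rw [show (n + 2) / 2 = n / 2 + 1 by omega, show n + 2 - (n / 2 + 1) = n - n / 2 + 1 by omega]
  exact h

theorem SatisfiesDisplacement.eq_toeplitzPart_add_hankelPart (hA : SatisfiesDisplacement A)
    (j k : ℕ) : A j k = toeplitzPart A (j - k) + hankelPart A (j + k) := by
  set B : ℕ → ℕ → α := fun j k => A j k - hankelPart A (j + k)
  have hB : ∀ j k, B (j + 1) (k + 1) = B j k := by
    intro j k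
    simp only [B, show j + 1 + (k + 1) = j + k + 2 by omega]
    rw [eq_comm, sub_eq_sub_iff_sub_eq_sub, hA.sub_diag_eq,
      hA.hankelPart_sub_hankelPart_add_two]
  have h := eq_tsub_tsub_of_diag_invariant B hB j k
  rw [toeplitzPart, show ((j : ℤ) - k).toNat = j - k by omega,
    show (-((j : ℤ) - k)).toNat = k - j by omega, ← sub_eq_iff_eq_add]
  exact h

end ToeplitzHankel

section Bounds

variable {α : Type*} [SeminormedAddCommGroup α] {A : ℕ → ℕ → α} {C : ℝ}

theorem norm_hankelPart_le (hC : ∀ j k, ‖A j k‖ ≤ C) (n : ℕ) : ‖hankelPart A n‖ ≤ C :=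
  hC _ _

theorem norm_toeplitzPart_le (hC : ∀ j k, ‖A j k‖ ≤ C) (m : ℤ) : ‖toeplitzPart A m‖ ≤ C + C :=
  (norm_sub_le _ _).trans (add_le_add (hC _ _) (norm_hankelPart_le hC _))

end Bounds

namespace GeneratesN

variable {p : ℝ≥0∞} [Fact (1 ≤ p)] {A : ℕ → ℕ → ℂ} {T : SeqN p →L[ℂ] SeqN p}

theorem entry_eq (hT : GeneratesN p A T) (j k : ℕ) :
    A j k = T (lp.single p k 1) j := by
  have h := hasSum_single (f := fun i => A j i * (lp.single p k 1 : SeqN p) i) k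
    fun i hi => by simp [hi]
  simpa using h.unique (hT _ j)

theorem norm_entry_le (hT : GeneratesN p A T) (j k : ℕ) : ‖A j k‖ ≤ ‖T‖ := by
  have hp : p ≠ 0 := (zero_lt_one.trans_le (Fact.out : 1 ≤ p)).ne'
  calc ‖A j k‖ = ‖T (lp.single p k 1) j‖ := by rw [hT.entry_eq]
    _ ≤ ‖T (lp.single p k 1)‖ := lp.norm_apply_le_norm hp _ j
    _ ≤ ‖T‖ * ‖(lp.single p k 1 : SeqN p)‖ := T.le_opNorm _
    _ = ‖T‖ := by rw [lp.norm_single (pos_iff_ne_zero.2 hp), norm_one, mul_one]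

end GeneratesN

/-- A bounded operator on `ℓ^p(ℕ₀)`, `1 ≤ p ≤ ∞`, whose matrix satisfies the
displacement relations `A_{j-1,k} + A_{j+1,k} - A_{j,k-1} - A_{j,k+1} = 0`
(for `j,k ≥ 1`) is the sum of a Toeplitz and a Hankel matrix:
`A_{j,k} = φ_{j-k} + ψ_{j+k+1}` with bounded sequences `φ ∈ ℓ^∞(ℤ)` and
`ψ ∈ ℓ^∞(ℕ)`.  (Here `ψ : ℕ → ℂ` records `(ψ_{n+1})_{n≥0}`, so the Hankel
part has entries `ψ (j + k)`.) -/
theorem statement12 (p : ℝ≥0∞) [Fact (1 ≤ p)] (A : ℕ → ℕ → ℂ)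
    (T : SeqN p →L[ℂ] SeqN p) (hgen : GeneratesN p A T)
    (hdisp : ∀ j k : ℕ, 1 ≤ j → 1 ≤ k →
      A (j - 1) k + A (j + 1) k - A j (k - 1) - A j (k + 1) = 0) :
    ∃ (φ : ℤ → ℂ) (ψ : ℕ → ℂ),
      BddAbove (Set.range fun n => ‖φ n‖) ∧
      BddAbove (Set.range fun n => ‖ψ n‖) ∧
      ∀ j k : ℕ, A j k = φ ((j : ℤ) - (k : ℤ)) + ψ (j + k) := by
  have hA : SatisfiesDisplacement A := fun j k => by
    have h := hdisp (j + 1) (k + 1) (by omega) (by omega)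
    simpa [sub_sub, sub_eq_zero] using h
  have hC := hgen.norm_entry_le
  exact ⟨toeplitzPart A, hankelPart A,
    ⟨_, Set.forall_mem_range.2 (norm_toeplitzPart_le hC)⟩,
    ⟨_, Set.forall_mem_range.2 (norm_hankelPart_le hC)⟩,
    hA.eq_toeplitzPart_add_hankelPart⟩
end
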